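/- Let n be even and let φ be a propositional formula over variables p₁,…,p_n. Then the quantified Boolean formula ∃p₁∀p₂∃p₃⋯∃p_{n-1}∀p_n φ is true if and only if the modal formula φ_exp ∧ (◇□)^{n/2} φ is satisfied at the root of some model based on a binary tree, where φ_exp = ⋀_{i=1}^n □^{i-1}(◇□^{n-i} p_i ∧ ◇□^{n-i} p̄_i) and (◇□)^{n/2} denotes n/2 alternations of ◇ followed by □. -/

import Mathlib

namespace PoorMansModal

/-- Modal formulas over propositional variables of type `α`: variables `p`,
negated variables `p̄`, general negation, conjunction, disjunction, box, diamond,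
and the constants `true` and `false`. -/
inductive Fml (α : Type) : Type where
  | var : α → Fml α
  | nvar : α → Fml α
  | neg : Fml α → Fml α
  | and : Fml α → Fml α → Fml α
  | or : Fml α → Fml α → Fml α
  | box : Fml α → Fml α
  | dia : Fml α → Fml α
  | tru : Fml α
  | fls : Fml α

/-- A Kripke model: a nonempty set of worlds, an accessibility relation, and a valuation. -/
structure Kripke (α : Type) where
  World : Type
  nonempty : Nonempty World
  R : World → World → Prop
  V : α → World → Prop

/-- Truth of a formula at a world of a model. -/
def Sat {α : Type} (M : Kripke α) : Fml α → M.World → Prop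
  | .var p, w => M.V p w
  | .nvar p, w => ¬ M.V p w
  | .neg φ, w => ¬ Sat M φ w
  | .and φ ψ, w => Sat M φ w ∧ Sat M ψ w
  | .or φ ψ, w => Sat M φ w ∨ Sat M ψ w
  | .box φ, w => ∀ v, M.R w v → Sat M φ v
  | .dia φ, w => ∃ v, M.R w v ∧ Sat M φ v
  | .tru, _ => True
  | .fls, _ => False

/-- Modal depth: depth of nesting of `□` and `◇`. -/
def mdep {α : Type} : Fml α → ℕ
  | .var _ => 0
  | .nvar _ => 0
  | .neg φ => mdep φ
  | .and φ ψ => max (mdep φ) (mdep ψ)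
  | .or φ ψ => max (mdep φ) (mdep ψ)
  | .box φ => mdep φ + 1
  | .dia φ => mdep φ + 1
  | .tru => 0
  | .fls => 0

/-- Conjunction of a list of formulas; the empty conjunction is the always-true formula. -/
def bigConj {α : Type} : List (Fml α) → Fml α
  | [] => .tru
  | [φ] => φ
  | φ :: rest => .and φ (bigConj rest)

/-- `□^k φ`. -/
def boxI {α : Type} : ℕ → Fml α → Fml α
  | 0, φ => φ
  | k + 1, φ => .box (boxI k φ)

/-- `◇^k φ`. -/
def diaI {α : Type} : ℕ → Fml α → Fml α
  | 0, φ => φ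
  | k + 1, φ => .dia (diaI k φ)

/-- `(◇□)^k φ`. -/
def diaBoxI {α : Type} : ℕ → Fml α → Fml α
  | 0, φ => φ
  | k + 1, φ => .dia (.box (diaBoxI k φ))

/-- The literal with variable `l.1` and sign `l.2` (`true` = positive). -/
def litF {α : Type} (l : α × Bool) : Fml α := if l.2 then .var l.1 else .nvar l.1

/-- The variable `p` occurs in the formula. -/
def occursV {α : Type} (p : α) : Fml α → Prop
  | .var q => p = q
  | .nvar q => p = q
  | .neg φ => occursV p φ
  | .and φ ψ => occursV p φ ∨ occursV p ψ
  | .or φ ψ => occursV p φ ∨ occursV p ψ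
  | .box φ => occursV p φ
  | .dia φ => occursV p φ
  | .tru => False
  | .fls => False

/-- Poor man's formulas: built from literals, `∧`, `□`, `◇` only. -/
def PoorF {α : Type} : Fml α → Prop
  | .var _ => True
  | .nvar _ => True
  | .and φ ψ => PoorF φ ∧ PoorF ψ
  | .box φ => PoorF φ
  | .dia φ => PoorF φ
  | _ => False

/-- Formulas of the language `L`: built from literals, `∧`, `∨`, `□`, `◇`. -/
def InL {α : Type} : Fml α → Prop
  | .var _ => True
  | .nvar _ => True
  | .and φ ψ => InL φ ∧ InL ψ
  | .or φ ψ => InL φ ∧ InL ψ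
  | .box φ => InL φ
  | .dia φ => InL φ
  | _ => False

/-- Every world has at most one successor. -/
def AtMostOne {W : Type} (R : W → W → Prop) : Prop :=
  ∀ w v v', R w v → R w v' → v = v'

/-- Every world has at least one successor. -/
def AtLeastOne {W : Type} (R : W → W → Prop) : Prop :=
  ∀ w, ∃ v, R w v

/-- Every world has at most two successors. -/
def AtMostTwo {W : Type} (R : W → W → Prop) : Prop :=
  ∀ w v₁ v₂ v₃, R w v₁ → R w v₂ → R w v₃ → v₁ = v₂ ∨ v₁ = v₃ ∨ v₂ = v₃

/-- `chainR R n w v`: there is an `R`-path of length exactly `n` from `w` to `v`. -/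
def chainR {W : Type} (R : W → W → Prop) : ℕ → W → W → Prop
  | 0, w, v => w = v
  | k + 1, w, v => ∃ u, R w u ∧ chainR R k u v

/-- `R` is the parent-child relation of a rooted tree with root `root`
in which every node has at most two children. -/
structure IsBinTree {W : Type} (R : W → W → Prop) (root : W) : Prop where
  reach : ∀ w, Relation.ReflTransGen R root w
  root_no_parent : ∀ w, ¬ R w root
  unique_parent : ∀ w v v', R v w → R v' w → v = v'
  acyclic : ∀ w, ¬ Relation.TransGen R w w
  at_most_two_children : ∀ w v₁ v₂ v₃, R w v₁ → R w v₂ → R w v₃ → v₁ = v₂ ∨ v₁ = v₃ ∨ v₂ = v₃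

/-- `φ_exp = ⋀_{i=1}^n □^{i-1}(◇□^{n-i} p_i ∧ ◇□^{n-i} p̄_i)`, with `p_i = var i`. -/
def phiExp (n : ℕ) : Fml ℕ :=
  bigConj ((List.range n).map (fun j =>
    boxI j (.and (.dia (boxI (n - 1 - j) (.var (j + 1))))
                 (.dia (boxI (n - 1 - j) (.nvar (j + 1)))))))

/-- Satisfiability with respect to the class of all frames. -/
def SatAll (φ : Fml ℕ) : Prop := ∃ (M : Kripke ℕ) (w : M.World), Sat M φ w

/-- Satisfiability with respect to `F≤1`. -/
def SatLe1 (φ : Fml ℕ) : Prop := ∃ M : Kripke ℕ, AtMostOne M.R ∧ ∃ w, Sat M φ w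

/-- Satisfiability with respect to `F≥1`. -/
def SatGe1 (φ : Fml ℕ) : Prop := ∃ M : Kripke ℕ, AtLeastOne M.R ∧ ∃ w, Sat M φ w

/-- Satisfiability with respect to `F≤2`. -/
def SatLe2 (φ : Fml ℕ) : Prop := ∃ M : Kripke ℕ, AtMostTwo M.R ∧ ∃ w, Sat M φ w

/-- A one-world model with no successors, realizing the boolean assignment `v`;
truth at its world is propositional truth for formulas without modal operators. -/
def propModel (v : ℕ → Bool) : Kripke ℕ :=
  { World := Unit, nonempty := ⟨()⟩, R := fun _ _ => False, V := fun p _ => v p = true }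

/-- Propositional satisfaction of `φ` under the assignment `v`. -/
def PropSat (v : ℕ → Bool) (φ : Fml ℕ) : Prop := Sat (propModel v) φ ()


/-- Propositional formulas: no modal operators (and no general negation or constants). -/
def IsProp : Fml ℕ → Prop
  | .var _ => True
  | .nvar _ => True
  | .and φ ψ => IsProp φ ∧ IsProp ψ
  | .or φ ψ => IsProp φ ∧ IsProp ψ
  | _ => False

/-- `qbfTrue φ i k v`: truth of the quantified Boolean formula with `k` remaining
alternating quantifiers over the variables `i, i+1, …, i+k-1` (existential at odd
indices, universal at even indices), with matrix `φ`, under the current assignment `v`.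
Starting it as `qbfTrue φ 1 n v` gives the truth of `∃p₁ ∀p₂ ∃p₃ ⋯ ∀p_n φ` for even `n`. -/
def qbfTrue (φ : Fml ℕ) : ℕ → ℕ → (ℕ → Bool) → Prop
  | _, 0, v => PropSat v φ
  | i, k + 1, v =>
      if i % 2 = 1 then ∃ b, qbfTrue φ (i + 1) k (Function.update v i b)
      else ∀ b, qbfTrue φ (i + 1) k (Function.update v i b)
/-!
The tree simulates the quantifier prefix. The formula `φ_exp` forces every node at depth
`j < n` to have, for each truth value `b`, a child below which every node at depth `n` gives
`p_{j+1}` the value `b`. In a binary tree these two children are all the children, so a node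
at depth `j` fixes the values of `p₁, …, p_j` at all depth-`n` nodes below it. Along
`(◇□)^{n/2}`, each `◇` then chooses the value of an existential variable and each `□` ranges
over both values of the following universal one, so evaluating `(◇□)^{n/2} φ` at the root
is evaluating the QBF. The full binary tree of bit strings, in which `p_i` holds at the
strings whose `i`-th bit is set, satisfies `φ_exp`.
-/

section Semantics

variable {α : Type} {M : Kripke α}

theorem sat_bigConj {L : List (Fml α)} {w : M.World} :
    Sat M (bigConj L) w ↔ ∀ ψ ∈ L, Sat M ψ w := by
  induction L with
  | nil => simp [bigConj, Sat]
  | cons ψ rest ih =>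
    cases rest with
    | nil => simp [bigConj]
    | cons χ rest => simp only [bigConj, Sat] at ih ⊢; simp [ih]

theorem chainR_snoc {W : Type} {R : W → W → Prop} {k : ℕ} {w u t : W}
    (h : chainR R k w u) (h' : R u t) : chainR R (k + 1) w t := by
  induction k generalizing w with
  | zero => exact ⟨t, (h : w = u) ▸ h', rfl⟩
  | succ k ih =>
    obtain ⟨x, hx, hc⟩ := h
    exact ⟨x, hx, ih hc⟩

theorem sat_boxI (k : ℕ) (φ : Fml α) (w : M.World) :
    Sat M (boxI k φ) w ↔ ∀ v, chainR M.R k w v → Sat M φ v := by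
  induction k generalizing w with
  | zero => exact ⟨fun h v hv => (hv : w = v) ▸ h, fun h => h w rfl⟩
  | succ k ih =>
    simp only [boxI, Sat, ih, chainR]
    exact ⟨fun h v ⟨u, hu, hv⟩ => h u hu v hv, fun h u hu v hv => h v ⟨u, hu, hv⟩⟩

end Semantics

theorem sat_iff_propSat {M : Kripke ℕ} {w : M.World} {v : ℕ → Bool} {φ : Fml ℕ}
    (hφ : IsProp φ) (h : ∀ p, occursV p φ → (M.V p w ↔ v p = true)) :
    Sat M φ w ↔ PropSat v φ := by
  induction φ with
  | var p => exact h p rfl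
  | nvar p => exact not_congr (h p rfl)
  | and φ ψ ihφ ihψ =>
    exact and_congr (ihφ hφ.1 fun p hp => h p (Or.inl hp))
      (ihψ hφ.2 fun p hp => h p (Or.inr hp))
  | or φ ψ ihφ ihψ =>
    exact or_congr (ihφ hφ.1 fun p hp => h p (Or.inl hp))
      (ihψ hφ.2 fun p hp => h p (Or.inr hp))
  | neg | box | dia | tru | fls => exact hφ.elim

theorem qbfTrue_odd_add_two (φ : Fml ℕ) (i k : ℕ) (v : ℕ → Bool) :
    qbfTrue φ (2 * i + 1) (k + 2) v ↔ ∃ b, ∀ b₂, qbfTrue φ (2 * i + 3) k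
      (Function.update (Function.update v (2 * i + 1) b) (2 * i + 2) b₂) := by
  rw [qbfTrue, if_pos (by omega)]
  refine exists_congr fun b => ?_
  rw [qbfTrue, if_neg (by omega)]

section Expansion

def FixesVar (M : Kripke ℕ) (m p : ℕ) (b : Bool) (w : M.World) : Prop :=
  ∀ t, chainR M.R m w t → (M.V p t ↔ b = true)

def FixesUpTo (M : Kripke ℕ) (m j : ℕ) (v : ℕ → Bool) (w : M.World) : Prop :=
  ∀ p, 1 ≤ p → p ≤ j → FixesVar M m p (v p) w

def Expands (M : Kripke ℕ) (r : M.World) (n : ℕ) : Prop :=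
  ∀ j < n, ∀ u, chainR M.R j r u → ∀ b,
    ∃ c, M.R u c ∧ FixesVar M (n - 1 - j) (j + 1) b c

variable {M : Kripke ℕ}

theorem sat_phiExp_iff {r : M.World} {n : ℕ} : Sat M (phiExp n) r ↔ Expands M r n := by
  simp only [phiExp, sat_bigConj, List.mem_map, List.mem_range, forall_exists_index, and_imp,
    forall_apply_eq_imp_iff₂, sat_boxI, Expands, FixesVar, Bool.forall_bool]
  simp [Sat, sat_boxI, and_comm]

theorem FixesVar.of_child {m p : ℕ} {b : Bool} {w c : M.World} (h : FixesVar M (m + 1) p b w)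
    (hc : M.R w c) : FixesVar M m p b c :=
  fun t ht => h t ⟨c, hc, ht⟩

theorem FixesUpTo.step {m j : ℕ} {v : ℕ → Bool} {b b₂ : Bool} {w c c₂ : M.World}
    (hv : FixesUpTo M (m + 2) j v w) (hc : M.R w c) (hc₂ : M.R c c₂)
    (hb : FixesVar M (m + 1) (j + 1) b c) (hb₂ : FixesVar M m (j + 2) b₂ c₂) :
    FixesUpTo M m (j + 2) (Function.update (Function.update v (j + 1) b) (j + 2) b₂) c₂ := by
  intro p hp1 hp2
  rcases (by omega : p ≤ j ∨ p = j + 1 ∨ p = j + 2) with hp | rfl | rfl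
  · rw [Function.update_of_ne (by omega), Function.update_of_ne (by omega)]
    exact ((hv p hp1 hp).of_child hc).of_child hc₂
  · rw [Function.update_of_ne (by omega), Function.update_self]
    exact hb.of_child hc₂
  · rw [Function.update_self]
    exact hb₂

variable {r : M.World} {n : ℕ}

theorem Expands.exists_child_fixesVar (hexp : Expands M r n) {j m : ℕ} (hjm : j + m + 1 = n)
    {u : M.World} (hu : chainR M.R j r u) (b : Bool) :
    ∃ c, M.R u c ∧ FixesVar M m (j + 1) b c := by
  obtain ⟨c, hc, hfix⟩ := hexp j (by omega) u hu b
  exact ⟨c, hc, (by omega : n - 1 - j = m) ▸ hfix⟩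

theorem Expands.exists_chainR (hexp : Expands M r n) {j m : ℕ} (hjm : j + m ≤ n)
    {u : M.World} (hu : chainR M.R j r u) : ∃ t, chainR M.R m u t := by
  induction m generalizing j u with
  | zero => exact ⟨u, rfl⟩
  | succ m ih =>
    obtain ⟨c, hc, -⟩ := hexp.exists_child_fixesVar (m := n - 1 - j) (by omega) hu true
    obtain ⟨t, ht⟩ := ih (by omega) (chainR_snoc hu hc)
    exact ⟨t, c, hc, ht⟩

/-- With at most two children per world, the two children provided by `Expands` are the only
ones, so every child fixes the next variable. -/
theorem Expands.exists_fixesVar_of_child (hexp : Expands M r n) (hM : AtMostTwo M.R) {j m : ℕ}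
    (hjm : j + m + 1 = n) {u c : M.World} (hu : chainR M.R j r u) (hc : M.R u c) :
    ∃ b, FixesVar M m (j + 1) b c := by
  obtain ⟨c₁, hc₁, h₁⟩ := hexp.exists_child_fixesVar hjm hu true
  obtain ⟨c₀, hc₀, h₀⟩ := hexp.exists_child_fixesVar hjm hu false
  have hne : c₁ ≠ c₀ := by
    rintro rfl
    obtain ⟨t, ht⟩ := hexp.exists_chainR (m := m) (by omega) (chainR_snoc hu hc₁)
    simpa using (h₀ t ht).1 ((h₁ t ht).2 rfl)
  rcases hM u c c₁ c₀ hc hc₁ hc₀ with rfl | rfl | h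
  exacts [⟨true, h₁⟩, ⟨false, h₀⟩, absurd h hne]

theorem sat_diaBoxI_iff_qbfTrue {m : ℕ} (hM : AtMostTwo M.R) (hexp : Expands M r (2 * m))
    {φ : Fml ℕ} (hφ : IsProp φ) (hvars : ∀ p, occursV p φ → 1 ≤ p ∧ p ≤ 2 * m) :
    ∀ k i, i + k = m → ∀ (w : M.World) (v : ℕ → Bool), chainR M.R (2 * i) r w →
      FixesUpTo M (2 * k) (2 * i) v w →
      (Sat M (diaBoxI k φ) w ↔ qbfTrue φ (2 * i + 1) (2 * k) v) := by
  intro k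
  induction k with
  | zero =>
    intro i hi w v _ hv
    refine sat_iff_propSat hφ fun p hp => ?_
    obtain ⟨hp1, hp2⟩ := hvars p hp
    exact hv p hp1 (by omega) w rfl
  | succ k ih =>
    intro i hi w v hw hv
    have descend : ∀ c c₂ b b₂, M.R w c → M.R c c₂ →
        FixesVar M (2 * k + 1) (2 * i + 1) b c → FixesVar M (2 * k) (2 * i + 2) b₂ c₂ →
        (Sat M (diaBoxI k φ) c₂ ↔ qbfTrue φ (2 * i + 3) (2 * k)
          (Function.update (Function.update v (2 * i + 1) b) (2 * i + 2) b₂)) :=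
      fun c c₂ b b₂ hc hc₂ hb hb₂ =>
        ih (i + 1) (by omega) c₂ _ (chainR_snoc (chainR_snoc hw hc) hc₂)
          (hv.step hc hc₂ hb hb₂)
    rw [show 2 * (k + 1) = 2 * k + 2 by ring, qbfTrue_odd_add_two]
    constructor
    · rintro ⟨c, hc, hsat⟩
      obtain ⟨b, hb⟩ := hexp.exists_fixesVar_of_child hM (m := 2 * k + 1) (by omega) hw hc
      refine ⟨b, fun b₂ => ?_⟩
      obtain ⟨c₂, hc₂, hb₂⟩ :=
        hexp.exists_child_fixesVar (m := 2 * k) (by omega) (chainR_snoc hw hc) b₂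
      exact (descend c c₂ b b₂ hc hc₂ hb hb₂).1 (hsat c₂ hc₂)
    · rintro ⟨b, hq⟩
      obtain ⟨c, hc, hb⟩ := hexp.exists_child_fixesVar (m := 2 * k + 1) (by omega) hw b
      refine ⟨c, hc, fun c₂ hc₂ => ?_⟩
      obtain ⟨b₂, hb₂⟩ :=
        hexp.exists_fixesVar_of_child hM (m := 2 * k) (by omega) (chainR_snoc hw hc) hc₂
      exact (descend c c₂ b b₂ hc hc₂ hb hb₂).2 (hq b₂)

end Expansion

abbrev bitTree : Kripke ℕ where
  World := List Bool
  nonempty := ⟨[]⟩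
  R w v := ∃ b, v = w ++ [b]
  V p w := w.getD (p - 1) false = true

theorem bitTree_chainR {k : ℕ} {w t : List Bool} (h : chainR bitTree.R k w t) :
    ∃ s : List Bool, s.length = k ∧ t = w ++ s := by
  induction k generalizing w with
  | zero => exact ⟨[], rfl, by simpa using (h : w = t).symm⟩
  | succ k ih =>
    obtain ⟨u, ⟨b, rfl⟩, hc⟩ := h
    obtain ⟨s, hs, rfl⟩ := ih hc
    exact ⟨b :: s, by simp [hs], by simp⟩

theorem bitTree_isBinTree : IsBinTree bitTree.R ([] : List Bool) where
  reach w := by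
    induction w using List.reverseRecOn with
    | nil => rfl
    | append_singleton w b ih => exact ih.tail ⟨b, rfl⟩
  root_no_parent w := by rintro ⟨b, hb⟩; simp at hb
  unique_parent w v v' := by
    rintro ⟨b, rfl⟩ ⟨b', hb'⟩
    exact (List.append_inj' hb' rfl).1
  acyclic w h := by
    have hlt : Relation.TransGen (· < ·) w.length w.length :=
      h.lift List.length fun _ _ ⟨_, hv⟩ => by simp [Function.onFun, hv]
    rw [Relation.transGen_eq_self] at hlt
    exact lt_irrefl _ hlt
  at_most_two_children := by
    rintro w _ _ _ ⟨b₁, rfl⟩ ⟨b₂, rfl⟩ ⟨b₃, rfl⟩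
    cases b₁ <;> cases b₂ <;> cases b₃ <;> simp

theorem bitTree_expands (n : ℕ) : Expands bitTree [] n := by
  intro j _ u hu b
  obtain ⟨_, rfl, rfl⟩ := bitTree_chainR hu
  refine ⟨_, ⟨b, rfl⟩, fun t ht => ?_⟩
  obtain ⟨s, -, rfl⟩ := bitTree_chainR ht
  simp

/-- For even `n` and a propositional formula `φ` over `p₁, …, p_n`, the
quantified Boolean formula `∃p₁ ∀p₂ ⋯ ∃p_{n-1} ∀p_n φ` is true iff
`φ_exp ∧ (◇□)^{n/2} φ` is satisfied at the root of some model based on a binary tree. -/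
theorem stmt12 (n : ℕ) (hn : Even n) (φ : Fml ℕ) (hφ : IsProp φ)
    (hvars : ∀ p, occursV p φ → 1 ≤ p ∧ p ≤ n) :
    qbfTrue φ 1 n (fun _ => false) ↔
      ∃ (M : Kripke ℕ) (r : M.World), IsBinTree M.R r ∧
        Sat M (.and (phiExp n) (diaBoxI (n / 2) φ)) r := by
  obtain ⟨m, rfl⟩ := hn
  rw [← two_mul] at hvars ⊢
  rw [Nat.mul_div_cancel_left m two_pos]
  have hroot : ∀ (M : Kripke ℕ) (r : M.World), IsBinTree M.R r → Expands M r (2 * m) →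
      (Sat M (diaBoxI m φ) r ↔ qbfTrue φ 1 (2 * m) fun _ => false) :=
    fun M r hbt hexp => sat_diaBoxI_iff_qbfTrue hbt.at_most_two_children hexp hφ hvars m 0
      (zero_add m) r _ rfl fun p hp1 hp2 => by omega
  constructor
  · intro h
    exact ⟨bitTree, [], bitTree_isBinTree, sat_phiExp_iff.2 (bitTree_expands _),
      (hroot _ _ bitTree_isBinTree (bitTree_expands _)).2 h⟩
  · rintro ⟨M, r, hbt, hexp, hsat⟩
    exact (hroot M r hbt (sat_phiExp_iff.1 hexp)).1 hsat

end PoorMansModal
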